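/- Restricted symmetry action on the modified plaquette operator: for a square face f with corner vertices v ∈ f and boundary edges e ∈ f, and for every subset S of the corner vertices of f, (∏_{v∈S} τ^x_v) · 𝑩̃_f · (∏_{v∈S} τ^x_v) = (∏_{v∈S} ∏_{e∈f, e∋v} i·g(e,v)·σ^x_e) · 𝑩̃_f, where g(e,v) = +1 if v = ∂₁e and g(e,v) = −1 if v = ∂₀e. Moreover τ^x_v·𝑸̃_v·τ^x_v = 𝑸̃_v and A_v is fixed, so a symmetry action restricted to any subset of vertex qubits fixes all A_v and 𝑸̃_v. -/

import Mathlib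

/-! Conjugation by `τ^x_v` flips the sign of `τ^z_v` and fixes every other Pauli operator, and
all the `σ^x_e` and `τ^z_w` commute.  Regrouped by corners, the exponent of `𝑩̃_f` is
`−(iπ/4) ∑_v (∑_{e∋v} g(e,v) σ^x_e) τ^z_v`, so conjugating by `τ^x_v` only adds the commuting
term `(iπ/2) ∑_{e∋v} g(e,v) σ^x_e τ^z_v`.  Each `g σ^x_e τ^z_v` is an involution `J`, for which
`exp ((iπ/2) J) = i J`; as `(τ^z_v)² = 1`, the extra factor is `∏_{e∋v} i g(e,v) σ^x_e`.

For `𝑸̃_v`, conjugation by `τ^x_v` negates the exponent `θ = −(iπ/4) τ^z_v ∑_{e∋v} f(e,v) σ^x_e`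
of `Q_v`; the two exponentials differ by the factor `exp (2θ) = A_v` (the same computation, at
the four edges of the star), which the projector `(1 + A_v)/2` absorbs.  Every other `τ^x_w`
commutes with `𝑸̃_v` and with `A_v` outright. -/

open Complex Matrix

noncomputable section

/-- The operator acting as the 2×2 matrix `M` on the qubit at site `j` of a finite qubit
system and as the identity on all other sites. -/
def localOp {S : Type*} [Fintype S] [DecidableEq S] (j : S)
    (M : Matrix (Fin 2) (Fin 2) ℂ) :
    Matrix (S → Fin 2) (S → Fin 2) ℂ :=
  Matrix.of fun f g => if ∀ k, k ≠ j → f k = g k then M (f j) (g j) else 0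

/-- The Pauli `X` matrix. -/
def PX : Matrix (Fin 2) (Fin 2) ℂ := !![0, 1; 1, 0]

/-- The Pauli `Z` matrix. -/
def PZ : Matrix (Fin 2) (Fin 2) ℂ := !![1, 0; 0, -1]

/-! A finite (boundary-free) patch of the square lattice ℤ²: the discrete torus `(ℤ/n)²`,
with one qubit on each vertex and one on each edge.  Each edge is oriented in the standard
way: horizontal edges from left to right, vertical edges from bottom to top, so `∂₀e` is the
base point of `e` and `∂₁e` the other endpoint. -/

/-- Vertices of the lattice. -/
abbrev TV (n : ℕ) := ZMod n × ZMod n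

/-- Edges: `(a, true)` is the horizontal edge based at `a`, `(a, false)` the vertical one. -/
abbrev TE (n : ℕ) := (ZMod n × ZMod n) × Bool

/-- Operators on the vertex and edge qubits of the lattice. -/
abbrev TOp (n : ℕ) [NeZero n] :=
  Matrix ((TV n ⊕ TE n) → Fin 2) ((TV n ⊕ TE n) → Fin 2) ℂ

variable (n : ℕ) [NeZero n]

/-- `τ^x_v`. -/ def tx (v : TV n) : TOp n := localOp (Sum.inl v) PX
/-- `τ^z_v`. -/ def tz (v : TV n) : TOp n := localOp (Sum.inl v) PZ
/-- `σ^x_e`. -/ def sx (e : TE n) : TOp n := localOp (Sum.inr e) PX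
/-- `σ^z_e`. -/ def sz (e : TE n) : TOp n := localOp (Sum.inr e) PZ

/-- `∂₀e`, the initial vertex of the edge `e` (standard orientation). -/
def d0 (e : TE n) : TV n := e.1

/-- `∂₁e`, the final vertex of the edge `e` (standard orientation). -/
def d1 (e : TE n) : TV n :=
  if e.2 then (e.1.1 + 1, e.1.2) else (e.1.1, e.1.2 + 1)

/-- The four edges meeting the vertex `v`: right, up, left, down. -/
def starE (v : TV n) : Fin 4 → TE n :=
  ![(v, true), (v, false), ((v.1 - 1, v.2), true), ((v.1, v.2 - 1), false)]

/-- The star operator `A_v := ∏_{e∋v} σ^x_e`. -/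
def Av (v : TV n) : TOp n :=
  ((List.finRange 4).map fun k => sx n (starE n v k)).prod

/-- `Q_v := τ^x_v · i^{−τ^z_v·∑_{e∋v} f(e,v)σ^x_e/2}`, where `f(e,v) = +1` if `v = ∂₀e`
and `f(e,v) = −1` if `v = ∂₁e`. -/
def Qv (v : TV n) : TOp n :=
  tx n v * NormedSpace.exp ((-((Real.pi : ℂ) * Complex.I) / 4) •
    (tz n v * (sx n (starE n v 0) + sx n (starE n v 1)
      - sx n (starE n v 2) - sx n (starE n v 3))))

/-- `𝑸̃_v := ((1+A_v)/2)·Q_v`. -/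
def Qtv (v : TV n) : TOp n := ((2 : ℂ)⁻¹ • ((1 : TOp n) + Av n v)) * Qv n v

/-- The four boundary edges of the face with lower-left corner `f`:
bottom, right, top, left; the boundary edge with index `k` joins the corners with indices
`k` and `k+1` (cyclically). -/
def bdryE (f : TV n) : Fin 4 → TE n :=
  ![(f, true), ((f.1 + 1, f.2), false), ((f.1, f.2 + 1), true), (f, false)]

/-- The four corner vertices of the face with lower-left corner `f`. -/
def cnr (f : TV n) : Fin 4 → TV n :=
  ![f, (f.1 + 1, f.2), (f.1 + 1, f.2 + 1), (f.1, f.2 + 1)]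

/-- The plaquette operator `B_f := ∏_{e∈f} σ^z_e`. -/
def Bf (f : TV n) : TOp n :=
  ((List.finRange 4).map fun k => sz n (bdryE n f k)).prod

/-- The modified plaquette operator
`𝑩̃_f := i^{−∑_{e∈f} σ^x_e(τ^z_{∂₁e} − τ^z_{∂₀e})/2}·B_f`. -/
def Btf (f : TV n) : TOp n :=
  NormedSpace.exp ((-((Real.pi : ℂ) * Complex.I) / 4) •
      (∑ k : Fin 4, sx n (bdryE n f k) *
        (tz n (d1 n (bdryE n f k)) - tz n (d0 n (bdryE n f k))))) * Bf n f

/-- The sign `g(e,v)`: `+1` if `v = ∂₁e` and `−1` if `v = ∂₀e`. -/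
def gsgn (e : TE n) (v : TV n) : ℂ := if d1 n e = v then 1 else -1

/-- The restricted spin flip `∏_{v∈S} τ^x_v` over a subset `S` of the corners of the
face `f`. -/
def GfaceS (f : TV n) (S : Finset (Fin 4)) : TOp n :=
  (((List.finRange 4).filter (fun j => j ∈ S)).map fun j => tx n (cnr n f j)).prod

/-- The decoration `∏_{v∈S} ∏_{e∈f, e∋v} i·g(e,v)·σ^x_e` produced by the restricted
symmetry: the corner with index `j` lies on the two boundary edges with indices `j−1`
and `j`. -/
def decoration (f : TV n) (S : Finset (Fin 4)) : TOp n :=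
  (((List.finRange 4).filter (fun j => j ∈ S)).map fun j =>
    ((Complex.I * gsgn n (bdryE n f (j - 1)) (cnr n f j)) • sx n (bdryE n f (j - 1))) *
      ((Complex.I * gsgn n (bdryE n f j) (cnr n f j)) • sx n (bdryE n f j))).prod


section LocalOperators

variable {S : Type*} [Fintype S] [DecidableEq S]

theorem localOp_mul_apply (j : S) (M : Matrix (Fin 2) (Fin 2) ℂ)
    (A : Matrix (S → Fin 2) (S → Fin 2) ℂ) (f g : S → Fin 2) :
    (localOp j M * A) f g = ∑ a, M (f j) a * A (Function.update f j a) g := by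
  rw [Matrix.mul_apply]
  refine (Fintype.sum_of_injective _ (Function.update_injective f j) _ _ ?_ ?_).symm
  · rintro h hh
    have hoff : ¬ ∀ k, k ≠ j → f k = h k := fun hfh =>
      hh ⟨h j, funext fun k => by
        by_cases hk : k = j
        · subst hk; simp
        · simp [Function.update_of_ne hk, hfh k hk]⟩
    simp [localOp, hoff]
  · intro a
    have hoff : ∀ k, k ≠ j → f k = Function.update f j a k := fun k hk => by
      simp [Function.update_of_ne hk]
    rw [localOp, Matrix.of_apply, if_pos hoff, Function.update_self]

theorem localOp_apply_eq_sum (j : S) (M : Matrix (Fin 2) (Fin 2) ℂ) (f g : S → Fin 2) :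
    localOp j M f g =
      ∑ a, M (f j) a * (1 : Matrix (S → Fin 2) (S → Fin 2) ℂ) (Function.update f j a) g := by
  rw [← localOp_mul_apply, mul_one]

theorem localOp_mul_localOp (j : S) (M N : Matrix (Fin 2) (Fin 2) ℂ) :
    localOp j M * localOp j N = localOp j (M * N) := by
  ext f g
  rw [localOp_mul_apply, localOp_apply_eq_sum j (M * N)]
  simp only [localOp_apply_eq_sum j N, Function.update_self, Matrix.mul_apply, Finset.mul_sum,
    Finset.sum_mul, mul_assoc]
  rw [Finset.sum_comm]
  refine Finset.sum_congr rfl fun b _ => Finset.sum_congr rfl fun a _ => ?_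
  rw [Function.update_idem]

theorem localOp_commute {j k : S} (hjk : j ≠ k) (M N : Matrix (Fin 2) (Fin 2) ℂ) :
    Commute (localOp j M) (localOp k N) := by
  ext f g
  simp only [localOp_mul_apply, localOp_apply_eq_sum, Function.update_of_ne hjk,
    Function.update_of_ne hjk.symm, Finset.mul_sum]
  rw [Finset.sum_comm]
  refine Finset.sum_congr rfl fun b _ => Finset.sum_congr rfl fun a _ => ?_
  rw [Function.update_comm hjk, mul_left_comm]

theorem localOp_commute_self (j k : S) (M : Matrix (Fin 2) (Fin 2) ℂ) :
    Commute (localOp j M) (localOp k M) := by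
  rcases eq_or_ne j k with rfl | h
  exacts [Commute.refl _, localOp_commute h M M]

theorem localOp_one (j : S) : localOp j (1 : Matrix (Fin 2) (Fin 2) ℂ) = 1 := by
  ext f g
  rw [localOp_apply_eq_sum, Fintype.sum_eq_single (f j) fun a ha => by
    simp [Matrix.one_apply, Ne.symm ha]]
  rw [Function.update_eq_self, Matrix.one_apply_eq, one_mul]

theorem localOp_neg (j : S) (M : Matrix (Fin 2) (Fin 2) ℂ) :
    localOp j (-M) = -localOp j M := by
  ext f g
  simp only [localOp, Matrix.of_apply, Matrix.neg_apply]
  split_ifs <;> simp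

theorem localOp_mul_self_eq_one (j : S) {M : Matrix (Fin 2) (Fin 2) ℂ} (hM : M * M = 1) :
    localOp j M * localOp j M = 1 := by
  rw [localOp_mul_localOp, hM, localOp_one]

end LocalOperators

theorem PX_mul_PX : PX * PX = 1 := by
  ext i j; fin_cases i <;> fin_cases j <;> simp [PX, Matrix.mul_apply, Fin.sum_univ_two]

theorem PZ_mul_PZ : PZ * PZ = 1 := by
  ext i j; fin_cases i <;> fin_cases j <;> simp [PZ, Matrix.mul_apply, Fin.sum_univ_two]

theorem PX_mul_PZ_mul_PX : PX * PZ * PX = -PZ := by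
  ext i j; fin_cases i <;> fin_cases j <;> simp [PX, PZ, Matrix.mul_apply, Fin.sum_univ_two]

section MatrixExponential

open NormedSpace

variable {m : Type*} [Fintype m] [DecidableEq m]

theorem exp_smul_of_mul_self_eq_one {J : Matrix m m ℂ} (hJ : J * J = 1) (θ : ℂ) :
    exp (θ • J) = Complex.cosh θ • 1 + Complex.sinh θ • J := by
  have hpow : ∀ k, J ^ (2 * k) = 1 := fun k => by rw [pow_mul, sq, hJ, one_pow]
  have heven : ∀ k : ℕ, ((2 * k).factorial⁻¹ : ℂ) • (θ • J) ^ (2 * k) =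
      (θ ^ (2 * k) / (2 * k).factorial) • (1 : Matrix m m ℂ) := fun k => by
    rw [smul_pow, hpow, smul_smul, div_eq_inv_mul]
  have hodd : ∀ k : ℕ, ((2 * k + 1).factorial⁻¹ : ℂ) • (θ • J) ^ (2 * k + 1) =
      (θ ^ (2 * k + 1) / (2 * k + 1).factorial) • J := fun k => by
    rw [smul_pow, pow_succ J, hpow, one_mul, smul_smul, div_eq_inv_mul]
  let : NormedRing (Matrix m m ℂ) := Matrix.linftyOpNormedRing
  let : NormedAlgebra ℂ (Matrix m m ℂ) := Matrix.linftyOpNormedAlgebra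
  refine (exp_series_hasSum_exp' (𝕂 := ℂ) (θ • J)).unique (HasSum.even_add_odd ?_ ?_)
  · simp only [heven]
    exact (Complex.hasSum_cosh θ).smul_const 1
  · simp only [hodd]
    exact (Complex.hasSum_sinh θ).smul_const J

theorem exp_pi_div_two_mul_I_smul {J : Matrix m m ℂ} (hJ : J * J = 1) :
    exp (((Real.pi : ℂ) * Complex.I / 2) • J) = Complex.I • J := by
  rw [exp_smul_of_mul_self_eq_one hJ, show (Real.pi : ℂ) * Complex.I / 2 =
    ((Real.pi / 2 : ℝ) : ℂ) * Complex.I by push_cast; ring, Complex.cosh_mul_I,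
    Complex.sinh_mul_I, ← Complex.ofReal_cos, ← Complex.ofReal_sin, Real.cos_pi_div_two,
    Real.sin_pi_div_two]
  simp

theorem exp_pi_div_two_mul_I_smul_add {A B : Matrix m m ℂ} (hA : A * A = 1) (hB : B * B = 1)
    (hAB : Commute A B) :
    exp (((Real.pi : ℂ) * Complex.I / 2) • (A + B)) = (Complex.I • A) * (Complex.I • B) := by
  rw [smul_add, Matrix.exp_add_of_commute _ _ ((hAB.smul_left _).smul_right _),
    exp_pi_div_two_mul_I_smul hA, exp_pi_div_two_mul_I_smul hB]

theorem exp_conj_of_mul_self_eq_one {x : Matrix m m ℂ} (hx : x * x = 1) (M : Matrix m m ℂ) :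
    x * exp M * x = exp (x * M * x) :=
  (Matrix.exp_units_conj ⟨x, x, hx, hx⟩ M).symm

theorem exp_conj_smul_add_of_conj_eq_neg {x Y R : Matrix m m ℂ} (hx : x * x = 1)
    (hY : x * Y * x = -Y) (hR : x * R * x = R) (hYR : Commute Y R) (c : ℂ) :
    x * exp (c • (Y + R)) * x = exp ((-2 * c) • Y) * exp (c • (Y + R)) := by
  have hconj : x * (c • (Y + R)) * x = (-2 * c) • Y + c • (Y + R) := by
    rw [mul_smul_comm, smul_mul_assoc, mul_add, add_mul, hY, hR]
    module
  rw [exp_conj_of_mul_self_eq_one hx, hconj, Matrix.exp_add_of_commute _ _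
    (((Commute.refl Y).add_right hYR).smul_left _ |>.smul_right _)]

end MatrixExponential

section Involutions

variable {M : Type*} [Monoid M]

theorem Commute.of_mul_mul_eq_of_mul_self_eq_one {x a : M} (hx : x * x = 1)
    (h : x * a * x = a) : Commute x a :=
  calc x * a = x * a * (x * x) := by rw [hx, mul_one]
    _ = a * x := by rw [← mul_assoc, h]

variable {ι : Type*}

theorem list_map_prod_mul_self {φ : ι → M} (hφ : ∀ i j, Commute (φ i) (φ j))
    (h : ∀ i, φ i * φ i = 1) (l : List ι) : (l.map φ).prod * (l.map φ).prod = 1 := by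
  induction l with
  | nil => simp
  | cons j l ih =>
    have hjP : Commute (φ j) (l.map φ).prod :=
      Commute.list_prod_right _ _ (List.forall_mem_map.2 fun i _ => hφ j i)
    simp only [List.map_cons, List.prod_cons]
    rw [hjP.symm.mul_mul_mul_comm, h, ih, one_mul]

theorem list_map_prod_conj {φ D : ι → M} {B : M} (hφ : ∀ i j, Commute (φ i) (φ j))
    (hφD : ∀ i j, Commute (φ i) (D j)) (hD : ∀ i j, Commute (D i) (D j))
    (h : ∀ i, φ i * B * φ i = D i * B) (l : List ι) :
    (l.map φ).prod * B * (l.map φ).prod = (l.map D).prod * B := by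
  induction l with
  | nil => simp
  | cons j l ih =>
    set P := (l.map φ).prod
    set Q := (l.map D).prod
    have hjP : Commute (φ j) P :=
      Commute.list_prod_right _ _ (List.forall_mem_map.2 fun i _ => hφ j i)
    have hjQ : Commute (φ j) Q :=
      Commute.list_prod_right _ _ (List.forall_mem_map.2 fun i _ => hφD j i)
    have hQj : Commute Q (D j) :=
      Commute.list_prod_left _ _ (List.forall_mem_map.2 fun i _ => hD i j)
    simp only [List.map_cons, List.prod_cons]
    calc φ j * P * B * (φ j * P) = φ j * (P * B * P) * φ j := by
          simp only [mul_assoc, ← hjP.eq]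
      _ = Q * (φ j * B * φ j) := by simp only [ih, mul_assoc, hjQ.left_comm]
      _ = D j * Q * B := by rw [h, ← mul_assoc, hQj.eq]

end Involutions

variable {n}

theorem tx_mul_self (v : TV n) : tx n v * tx n v = 1 := localOp_mul_self_eq_one _ PX_mul_PX

theorem tz_mul_self (v : TV n) : tz n v * tz n v = 1 := localOp_mul_self_eq_one _ PZ_mul_PZ

theorem sx_mul_self (e : TE n) : sx n e * sx n e = 1 := localOp_mul_self_eq_one _ PX_mul_PX

theorem tx_mul_tz_mul_tx (v : TV n) : tx n v * tz n v * tx n v = -tz n v := by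
  rw [tx, tz, localOp_mul_localOp, localOp_mul_localOp, PX_mul_PZ_mul_PX, localOp_neg]

theorem commute_tx_tx (v w : TV n) : Commute (tx n v) (tx n w) := localOp_commute_self _ _ _

theorem commute_sx_sx (e e' : TE n) : Commute (sx n e) (sx n e') := localOp_commute_self _ _ _

theorem commute_tz_tz (v w : TV n) : Commute (tz n v) (tz n w) := localOp_commute_self _ _ _

theorem commute_tx_sx (v : TV n) (e : TE n) : Commute (tx n v) (sx n e) :=
  localOp_commute Sum.inl_ne_inr _ _

theorem commute_tx_sz (v : TV n) (e : TE n) : Commute (tx n v) (sz n e) :=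
  localOp_commute Sum.inl_ne_inr _ _

theorem commute_tz_sx (v : TV n) (e : TE n) : Commute (tz n v) (sx n e) :=
  localOp_commute Sum.inl_ne_inr _ _

theorem commute_tx_tz_of_ne {v w : TV n} (h : v ≠ w) : Commute (tx n v) (tz n w) :=
  localOp_commute (Sum.inl_injective.ne h) _ _

theorem tx_mul_tz_mul_tx_of_ne {v w : TV n} (h : v ≠ w) :
    tx n v * tz n w * tx n v = tz n w := by
  rw [(commute_tx_tz_of_ne h).eq, mul_assoc, tx_mul_self, mul_one]

theorem commute_tx_Av (v w : TV n) : Commute (tx n v) (Av n w) :=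
  Commute.list_prod_right _ _ (List.forall_mem_map.2 fun _ _ => commute_tx_sx _ _)

theorem commute_tx_Bf (v f : TV n) : Commute (tx n v) (Bf n f) :=
  Commute.list_prod_right _ _ (List.forall_mem_map.2 fun _ _ => commute_tx_sz _ _)

theorem Av_eq (v : TV n) : Av n v =
    sx n (starE n v 0) * sx n (starE n v 1) * sx n (starE n v 2) * sx n (starE n v 3) := by
  simp [Av, List.finRange_succ, mul_assoc]

theorem Av_mul_self (v : TV n) : Av n v * Av n v = 1 :=
  list_map_prod_mul_self (fun _ _ => commute_sx_sx _ _) (fun _ => sx_mul_self _) _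

theorem commute_smul_sx_mul_tz (g g' : ℂ) (e e' : TE n) (v w : TV n) :
    Commute (g • (sx n e * tz n v)) (g' • (sx n e' * tz n w)) :=
  (((commute_sx_sx e e').mul_right (commute_tz_sx w e).symm).mul_left
    ((commute_tz_sx v e').mul_right (commute_tz_tz v w))).smul_left _ |>.smul_right _

theorem smul_sx_mul_tz_mul_self {g : ℂ} (hg : g * g = 1) (e : TE n) (v : TV n) :
    (g • (sx n e * tz n v)) * (g • (sx n e * tz n v)) = 1 := by
  rw [smul_mul_smul_comm, hg, one_smul, mul_assoc, (commute_tz_sx v e).left_comm,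
    tz_mul_self, mul_one, sx_mul_self]

theorem sx_mul_tz_mul_sx_mul_tz (e e' : TE n) (v : TV n) :
    sx n e * tz n v * (sx n e' * tz n v) = sx n e * sx n e' := by
  rw [mul_assoc, (commute_tz_sx v e').left_comm, tz_mul_self, mul_one]

theorem exp_pi_div_two_mul_I_smul_add_sx_mul_tz {g g' : ℂ} (hg : g * g = 1)
    (hg' : g' * g' = 1) (e e' : TE n) (v : TV n) :
    NormedSpace.exp (((Real.pi : ℂ) * Complex.I / 2) •
        (g • (sx n e * tz n v) + g' • (sx n e' * tz n v))) =
      ((Complex.I * g) • sx n e) * ((Complex.I * g') • sx n e') := by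
  rw [exp_pi_div_two_mul_I_smul_add (smul_sx_mul_tz_mul_self hg e v)
    (smul_sx_mul_tz_mul_self hg' e' v) (commute_smul_sx_mul_tz _ _ _ _ _ _)]
  simp only [smul_mul_smul_comm, smul_smul, sx_mul_tz_mul_sx_mul_tz]

theorem exp_neg_pi_div_two_mul_I_smul_star_eq_Av (v : TV n) :
    NormedSpace.exp ((-((Real.pi : ℂ) * Complex.I) / 2) •
      (tz n v * (sx n (starE n v 0) + sx n (starE n v 1)
        - sx n (starE n v 2) - sx n (starE n v 3)))) = Av n v := by
  have harg : (-((Real.pi : ℂ) * Complex.I) / 2) •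
      (tz n v * (sx n (starE n v 0) + sx n (starE n v 1)
        - sx n (starE n v 2) - sx n (starE n v 3))) =
      ((Real.pi : ℂ) * Complex.I / 2) •
          ((-1 : ℂ) • (sx n (starE n v 0) * tz n v) + (-1 : ℂ) • (sx n (starE n v 1) * tz n v)) +
        ((Real.pi : ℂ) * Complex.I / 2) •
          ((1 : ℂ) • (sx n (starE n v 2) * tz n v) + (1 : ℂ) • (sx n (starE n v 3) * tz n v)) := by
    simp only [mul_add, mul_sub, (commute_tz_sx v _).eq]
    module
  have hc := commute_smul_sx_mul_tz (n := n)
  rw [harg, Matrix.exp_add_of_commute _ _ ((((hc _ _ _ _ _ _).add_right (hc _ _ _ _ _ _)).add_left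
      ((hc _ _ _ _ _ _).add_right (hc _ _ _ _ _ _))).smul_left _ |>.smul_right _),
    exp_pi_div_two_mul_I_smul_add_sx_mul_tz (by norm_num) (by norm_num),
    exp_pi_div_two_mul_I_smul_add_sx_mul_tz (by norm_num) (by norm_num), Av_eq]
  simp only [smul_mul_smul_comm, ← mul_assoc]
  rw [show Complex.I * -1 * Complex.I * -1 * Complex.I * 1 * Complex.I * 1 = 1 by
    ring_nf; exact Complex.I_pow_four, one_smul]

theorem tx_mul_Qtv_mul_tx (v : TV n) : tx n v * Qtv n v * tx n v = Qtv n v := by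
  set D := sx n (starE n v 0) + sx n (starE n v 1) - sx n (starE n v 2) - sx n (starE n v 3)
  set T := tz n v * D
  set c : ℂ := -((Real.pi : ℂ) * Complex.I) / 4
  set P : TOp n := (2 : ℂ)⁻¹ • (1 + Av n v)
  have hxT : tx n v * T * tx n v = -T := by
    have hxD : Commute (tx n v) D := (((commute_tx_sx _ _).add_right
      (commute_tx_sx _ _)).sub_right (commute_tx_sx _ _)).sub_right (commute_tx_sx _ _)
    rw [← mul_assoc, mul_assoc _ _ (tx n v), ← hxD.eq, ← mul_assoc, tx_mul_tz_mul_tx, neg_mul]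
  have hxE : tx n v * NormedSpace.exp (c • T) = NormedSpace.exp ((-c) • T) * tx n v := by
    have hconj : (-c) • T = tx n v * (c • T) * tx n v := by
      rw [mul_smul_comm, smul_mul_assoc, hxT, smul_neg, neg_smul]
    rw [hconj, ← exp_conj_of_mul_self_eq_one (tx_mul_self v), mul_assoc _ (tx n v), tx_mul_self,
      mul_one]
  have hPE : P * NormedSpace.exp (c • T) = P * NormedSpace.exp ((-c) • T) := by
    have hsplit : c • T = (-((Real.pi : ℂ) * Complex.I) / 2) • T + (-c) • T := by
      simp only [c]; module
    rw [hsplit, Matrix.exp_add_of_commute _ _ (((Commute.refl T).smul_left _).smul_right _),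
      exp_neg_pi_div_two_mul_I_smul_star_eq_Av, ← mul_assoc]
    congr 1
    rw [smul_mul_assoc, add_mul, one_mul, Av_mul_self, add_comm]
  have hxP : Commute (tx n v) P :=
    ((Commute.one_right _).add_right (commute_tx_Av v v)).smul_right _
  rw [Qtv, Qv]
  calc tx n v * (P * (tx n v * NormedSpace.exp (c • T))) * tx n v
      = P * (tx n v * tx n v) * NormedSpace.exp (c • T) * tx n v := by
        simp only [← mul_assoc, hxP.eq]
    _ = P * NormedSpace.exp ((-c) • T) * tx n v := by rw [tx_mul_self, mul_one, hPE]
    _ = P * (tx n v * NormedSpace.exp (c • T)) := by rw [hxE, mul_assoc]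

theorem commute_tx_Qtv (w v : TV n) : Commute (tx n w) (Qtv n v) := by
  rcases eq_or_ne w v with rfl | h
  · exact Commute.of_mul_mul_eq_of_mul_self_eq_one (tx_mul_self w) (tx_mul_Qtv_mul_tx w)
  · have hx : Commute (tx n w) (tz n v * (sx n (starE n v 0) + sx n (starE n v 1)
        - sx n (starE n v 2) - sx n (starE n v 3))) :=
      (commute_tx_tz_of_ne h).mul_right ((((commute_tx_sx _ _).add_right
        (commute_tx_sx _ _)).sub_right (commute_tx_sx _ _)).sub_right (commute_tx_sx _ _))
    exact (((Commute.one_right _).add_right (commute_tx_Av w v)).smul_right _).mul_right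
      ((commute_tx_tx w v).mul_right (hx.smul_right _).exp_right)

omit [NeZero n] in
theorem cnr_injective (hn : 1 < n) (f : TV n) : Function.Injective (cnr n f) := by
  have : Fact (1 < n) := ⟨hn⟩
  intro i j h
  fin_cases i <;> fin_cases j <;> simp_all [cnr, Prod.ext_iff]

omit [NeZero n] in
theorem gsgn_mul_self (e : TE n) (v : TV n) : gsgn n e v * gsgn n e v = 1 := by
  unfold gsgn; split_ifs <;> norm_num

/-- The terms of the exponent of `Btf n f` that contain `τ^z` at the corner `v = cnr n f j`:
`∑_{e∋v} g(e,v) σ^x_e τ^z_v`. -/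
def cornerTerm (f : TV n) (j : Fin 4) : TOp n :=
  gsgn n (bdryE n f (j - 1)) (cnr n f j) • (sx n (bdryE n f (j - 1)) * tz n (cnr n f j)) +
    gsgn n (bdryE n f j) (cnr n f j) • (sx n (bdryE n f j) * tz n (cnr n f j))

def cornerDecoration (f : TV n) (j : Fin 4) : TOp n :=
  ((Complex.I * gsgn n (bdryE n f (j - 1)) (cnr n f j)) • sx n (bdryE n f (j - 1))) *
    ((Complex.I * gsgn n (bdryE n f j) (cnr n f j)) • sx n (bdryE n f j))

theorem plaquette_exponent_eq_sum_cornerTerm (hn : 1 < n) (f : TV n) :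
    ∑ k : Fin 4, sx n (bdryE n f k) * (tz n (d1 n (bdryE n f k)) - tz n (d0 n (bdryE n f k))) =
      ∑ j, cornerTerm f j := by
  have hd0 : ∀ k, d0 n (bdryE n f k) = cnr n f (![0, 1, 3, 0] k) := fun k => by
    fin_cases k <;> rfl
  have hd1 : ∀ k, d1 n (bdryE n f k) = cnr n f (![1, 2, 2, 3] k) := fun k => by
    fin_cases k <;> rfl
  have hpred : (0 : Fin 4) - 1 = 3 := rfl
  simp only [Fin.sum_univ_four, cornerTerm, gsgn, hd1, hd0, (cnr_injective hn f).eq_iff, hpred]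
  simp [mul_sub]
  abel

theorem tx_mul_smul_sx_mul_tz_mul_tx (g : ℂ) (e : TE n) (v w : TV n) :
    tx n v * (g • (sx n e * tz n w)) * tx n v = g • (sx n e * (tx n v * tz n w * tx n v)) := by
  rw [mul_smul_comm, smul_mul_assoc, ← mul_assoc, (commute_tx_sx v e).eq, mul_assoc, mul_assoc,
    mul_assoc]

theorem tx_mul_cornerTerm_mul_tx_self (f : TV n) (j : Fin 4) :
    tx n (cnr n f j) * cornerTerm f j * tx n (cnr n f j) = -cornerTerm f j := by
  rw [cornerTerm, mul_add, add_mul, tx_mul_smul_sx_mul_tz_mul_tx, tx_mul_smul_sx_mul_tz_mul_tx,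
    tx_mul_tz_mul_tx]
  simp only [mul_neg, smul_neg, neg_add]

theorem tx_mul_cornerTerm_mul_tx_of_ne (hn : 1 < n) (f : TV n) {i j : Fin 4} (h : i ≠ j) :
    tx n (cnr n f j) * cornerTerm f i * tx n (cnr n f j) = cornerTerm f i := by
  rw [cornerTerm, mul_add, add_mul, tx_mul_smul_sx_mul_tz_mul_tx, tx_mul_smul_sx_mul_tz_mul_tx,
    tx_mul_tz_mul_tx_of_ne ((cnr_injective hn f).ne h.symm)]

theorem commute_cornerTerm (f : TV n) (i j : Fin 4) :
    Commute (cornerTerm f i) (cornerTerm f j) :=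
  have hc := commute_smul_sx_mul_tz (n := n)
  ((hc _ _ _ _ _ _).add_right (hc _ _ _ _ _ _)).add_left
    ((hc _ _ _ _ _ _).add_right (hc _ _ _ _ _ _))

theorem commute_tx_cornerDecoration (v f : TV n) (j : Fin 4) :
    Commute (tx n v) (cornerDecoration f j) :=
  ((commute_tx_sx _ _).smul_right _).mul_right ((commute_tx_sx _ _).smul_right _)

theorem commute_cornerDecoration (f : TV n) (i j : Fin 4) :
    Commute (cornerDecoration f i) (cornerDecoration f j) :=
  have hc (e e' : TE n) (a b : ℂ) : Commute (a • sx n e) (b • sx n e') :=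
    ((commute_sx_sx e e').smul_left a).smul_right b
  ((hc _ _ _ _).mul_right (hc _ _ _ _)).mul_left ((hc _ _ _ _).mul_right (hc _ _ _ _))

theorem exp_pi_div_two_mul_I_smul_cornerTerm (f : TV n) (j : Fin 4) :
    NormedSpace.exp (((Real.pi : ℂ) * Complex.I / 2) • cornerTerm f j) = cornerDecoration f j :=
  exp_pi_div_two_mul_I_smul_add_sx_mul_tz (gsgn_mul_self _ _) (gsgn_mul_self _ _) _ _ _

theorem tx_mul_Btf_mul_tx (hn : 1 < n) (f : TV n) (j : Fin 4) :
    tx n (cnr n f j) * Btf n f * tx n (cnr n f j) = cornerDecoration f j * Btf n f := by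
  set R := ∑ i ∈ Finset.univ.erase j, cornerTerm f i
  have hR : tx n (cnr n f j) * R * tx n (cnr n f j) = R := by
    rw [Finset.mul_sum, Finset.sum_mul]
    exact Finset.sum_congr rfl fun i hi =>
      tx_mul_cornerTerm_mul_tx_of_ne hn f (Finset.ne_of_mem_erase hi)
  have hYR : Commute (cornerTerm f j) R :=
    Commute.sum_right _ _ _ fun i _ => commute_cornerTerm f j i
  rw [Btf, plaquette_exponent_eq_sum_cornerTerm hn f,
    ← Finset.add_sum_erase _ _ (Finset.mem_univ j), ← mul_assoc,
    mul_assoc _ _ (tx n (cnr n f j)), ← (commute_tx_Bf _ f).eq, ← mul_assoc,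
    exp_conj_smul_add_of_conj_eq_neg (tx_mul_self _) (tx_mul_cornerTerm_mul_tx_self f j) hR hYR,
    show -2 * (-((Real.pi : ℂ) * Complex.I) / 4) = (Real.pi : ℂ) * Complex.I / 2 by ring,
    exp_pi_div_two_mul_I_smul_cornerTerm, mul_assoc]

/-- **restricted symmetry action on the modified plaquette operator.**
For every face `f` and every subset `S` of its corner vertices,
`(∏_{v∈S} τ^x_v) · 𝑩̃_f · (∏_{v∈S} τ^x_v) = (∏_{v∈S} ∏_{e∈f, e∋v} i·g(e,v)·σ^x_e) · 𝑩̃_f`,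
where `g(e,v) = +1` if `v = ∂₁e` and `g(e,v) = −1` if `v = ∂₀e`.  Moreover
`τ^x_v·𝑸̃_v·τ^x_v = 𝑸̃_v` and the `τ^x`'s commute with `A_v`, so a symmetry action
restricted to any subset of vertex qubits fixes all `A_v` and `𝑸̃_v`. -/
theorem restricted_symmetry_on_modified_plaquette (hn : 5 ≤ n) :
    (∀ (f : TV n) (S : Finset (Fin 4)),
        GfaceS n f S * Btf n f * GfaceS n f S = decoration n f S * Btf n f) ∧
      (∀ v : TV n, tx n v * Qtv n v * tx n v = Qtv n v) ∧
      (∀ (l : List (TV n)) (v : TV n),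
        Commute ((l.map (tx n)).prod) (Av n v) ∧
          Commute ((l.map (tx n)).prod) (Qtv n v)) := by
  refine ⟨fun f S => ?_, tx_mul_Qtv_mul_tx, fun l v => ⟨?_, ?_⟩⟩
  · exact list_map_prod_conj (fun _ _ => commute_tx_tx _ _)
      (fun _ _ => commute_tx_cornerDecoration _ f _) (commute_cornerDecoration f)
      (tx_mul_Btf_mul_tx (by omega) f) _
  · exact Commute.list_prod_left _ _ (List.forall_mem_map.2 fun w _ => commute_tx_Av w v)
  · exact Commute.list_prod_left _ _ (List.forall_mem_map.2 fun w _ => commute_tx_Qtv w v)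

end
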